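/- arXiv:2103.08021 — 7 statements merged into one kernel-verified Lean document; each statement's English description precedes it below -/
import Mathlib

section
/- Let M be a matroid on a finite ground set E. If |E| = 1 then t_M = 1. If |E| ≥ 2 and i ∈ E, then: t_M = (x+y)·t_{M∖i} if i is a loop of M; t_M = (x+y)·t_{M/i} if i is a coloop of M; and t_M = (x+w)·t_{M∖i} + (y+z)·t_{M/i} if i is neither a loop nor a coloop of M. -/
open Matroid MvPolynomial

variable {α : Type*}

-- The rank of a finset `A` in a matroid `M`: the maximal size of an independent subset of `A`.
open scoped Classical in
noncomputable def matRank [Fintype α] (M : Matroid α) (A : Finset α) : ℕ :=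
  (A.powerset.filter (fun I : Finset α => M.Indep (I : Set α))).sup Finset.card

/-- The (finite) ground set of a matroid on a finite type, as a finset. -/
noncomputable def groundFinset [Fintype α] (M : Matroid α) : Finset α :=
  M.E.toFinite.toFinset

/-- `g_M(x,y,z,w) = ∑_{A ⊆ E} (x−z)^{r−rk A} (y+z)^{rk A} (y−w)^{|A|−rk A}
(x+w)^{(|E|−|A|)−(r−rk A)}`, with `x = X 0`, `y = X 1`, `z = X 2`, `w = X 3`;
equivalently `g_M = (y+z)^r (x+w)^{|E|−r} T_M((x+y)/(y+z), (x+y)/(x+w))`. -/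
noncomputable def gPoly [Fintype α] (M : Matroid α) : MvPolynomial (Fin 4) ℤ :=
  ∑ A ∈ (groundFinset M).powerset,
    (X 0 - X 2) ^ (matRank M (groundFinset M) - matRank M A) *
      (X 1 + X 2) ^ (matRank M A) *
      (X 1 - X 3) ^ (A.card - matRank M A) *
      (X 0 + X 3) ^ (((groundFinset M).card - A.card)
        - (matRank M (groundFinset M) - matRank M A))

/-- Deletion of a set `D` from the matroid `M`: the restriction of `M` to `M.E \ D`. -/
def mdelete (M : Matroid α) (D : Set α) : Matroid α := M ↾ (M.E \ D)

/-- Contraction of a set `C` in the matroid `M`, defined via duality: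
`M / C = (M✶ \ C)✶`, a matroid on `M.E \ C`. -/
def mcontract (M : Matroid α) (C : Set α) : Matroid α := (M✶ ↾ (M.E \ C))✶

/-- Substituting `x := 0` (the variable `X 0`) into a polynomial in `x, y, z, w`. -/
noncomputable def subX0 : MvPolynomial (Fin 4) ℤ →ₐ[ℤ] MvPolynomial (Fin 4) ℤ :=
  aeval fun j => if j = 0 then 0 else X j

/-- Substituting `y := 0` (the variable `X 1`) into a polynomial in `x, y, z, w`. -/
noncomputable def subY0 : MvPolynomial (Fin 4) ℤ →ₐ[ℤ] MvPolynomial (Fin 4) ℤ :=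
  aeval fun j => if j = 1 then 0 else X j

/-!
Pair each `A ⊆ E \ {i}` with `A ∪ {i}`; subsets of `E \ {i}` keep their rank in `M ＼ {i}`, and
`rk_{M ／ {i}} A = rk (A ∪ {i}) - rk {i}`. Comparing exponents, the summand of `g_M` at `A` is
`x + w` times that of `g_{M ＼ {i}}` when `i` is not a coloop, and `x - z` times that of
`g_{M ／ {i}}` when it is; the summand at `A ∪ {i}` is `y - w` times that of `g_{M ＼ {i}}` at `A`
when `i` is a loop, and `y + z` times that of `g_{M ／ {i}}` when it is not. Summing, a loop gives
`x + y` times `g_{M ＼ {i}}`, a coloop `x + y` times `g_{M ／ {i}}`, and any other element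
`(x + w) g_{M ＼ {i}} + (y + z) g_{M ／ {i}}`; then cancel the nonzero divisor `x + y`.
-/

lemma Matroid.eRk_contract_add_eRk (M : Matroid α) {C X : Set α} (hXC : Disjoint X C) :
    (M ／ C).eRk X + M.eRk C = M.eRk (X ∪ C) := by
  obtain ⟨I, hI⟩ := M.exists_isBasis' C
  obtain ⟨K, hK, hIK⟩ := hI.indep.subset_isBasis'_of_subset (hI.subset.trans Set.subset_union_right)
  have hKC : K ∩ C = I := hI.inter_eq_of_subset_indep hIK hK.indep
  have hcon : (M ／ C).IsBasis' (K \ C) X := by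
    have := hK.contract_isBasis' hI (hK.indep.subset (Set.union_subset Set.sdiff_subset hIK))
    rwa [Set.union_sdiff_right, hXC.sdiff_eq_left] at this
  rw [hcon.eRk_eq_encard, hI.eRk_eq_encard, hK.eRk_eq_encard,
    ← Set.encard_union_eq (Set.disjoint_sdiff_left.mono_right hI.subset), ← hKC,
    Set.sdiff_union_inter]

lemma Finset.sum_powerset_eq_sum_powerset_erase {β : Type*} [AddCommMonoid β] [DecidableEq α]
    {s : Finset α} {i : α} (hi : i ∈ s) (f : Finset α → β) :
    ∑ A ∈ s.powerset, f A = ∑ A ∈ (s.erase i).powerset, (f A + f (insert i A)) := by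
  rw [Finset.sum_add_distrib, ← Finset.sum_powerset_insert (Finset.notMem_erase i s),
    Finset.insert_erase hi]

section matRank

variable [Fintype α] {M : Matroid α} {A B : Finset α} {i : α}

lemma coe_groundFinset (M : Matroid α) : (groundFinset M : Set α) = M.E :=
  Set.Finite.coe_toFinset _

lemma mem_groundFinset : i ∈ groundFinset M ↔ i ∈ M.E :=
  Set.Finite.mem_toFinset _

lemma matRank_eq_eRk (M : Matroid α) (A : Finset α) : (matRank M A : ℕ∞) = M.eRk A := by
  classical
  unfold matRank
  refine le_antisymm ?_ (eRk_le_iff.2 fun I hIA hI => ?_)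
  · obtain ⟨J, hJ, hJsup⟩ := Finset.exists_mem_eq_sup
      (A.powerset.filter fun I : Finset α => M.Indep (I : Set α)) ⟨∅, by simp⟩ Finset.card
    rw [Finset.mem_filter, Finset.mem_powerset] at hJ
    rw [hJsup, ← Set.encard_coe_eq_coe_finsetCard]
    exact hJ.2.encard_le_eRk_of_subset (by exact_mod_cast hJ.1)
  · lift I to Finset α using A.finite_toSet.subset hIA
    rw [Set.encard_coe_eq_coe_finsetCard, Nat.cast_le]
    exact Finset.le_sup (Finset.mem_filter.2 ⟨Finset.mem_powerset.2 (by exact_mod_cast hIA), hI⟩)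

lemma matRank_le_card (M : Matroid α) (A : Finset α) : matRank M A ≤ A.card := by
  have := M.eRk_le_encard A
  rwa [← matRank_eq_eRk, Set.encard_coe_eq_coe_finsetCard, Nat.cast_le] at this

lemma matRank_mono (M : Matroid α) (hAB : A ⊆ B) : matRank M A ≤ matRank M B := by
  have := M.eRk_mono (Finset.coe_subset.2 hAB)
  rwa [← matRank_eq_eRk, ← matRank_eq_eRk, Nat.cast_le] at this

lemma matRank_delete (M : Matroid α) {D : Set α} (hAD : Disjoint (A : Set α) D) :
    matRank (M ＼ D) A = matRank M A := by
  rw [← Nat.cast_inj (R := ℕ∞), matRank_eq_eRk, matRank_eq_eRk, delete_eq_restrict,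
    restrict_eRk_eq', ← Set.inter_sdiff_assoc,
    (hAD.mono_left Set.inter_subset_left).sdiff_eq_left, eRk_inter_ground]

variable [DecidableEq α]

lemma card_add_matRank_sub_matRank_le (M : Matroid α) (hAB : A ⊆ B) :
    A.card + (matRank M B - matRank M A) ≤ B.card := by
  have h := M.eRk_union_le_eRk_add_encard A ↑(B \ A)
  rw [← Finset.coe_union, Finset.union_sdiff_of_subset hAB, ← matRank_eq_eRk, ← matRank_eq_eRk,
    Set.encard_coe_eq_coe_finsetCard, ← Nat.cast_add, Nat.cast_le,
    Finset.card_sdiff_of_subset hAB] at h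
  have := Finset.card_le_card hAB
  omega

lemma matRank_contract_add_matRank (M : Matroid α) (hiA : i ∉ A) :
    matRank (M ／ {i}) A + matRank M {i} = matRank M (insert i A) := by
  rw [← Nat.cast_inj (R := ℕ∞), Nat.cast_add, matRank_eq_eRk, matRank_eq_eRk, matRank_eq_eRk,
    Finset.coe_singleton, Finset.coe_insert, ← Set.union_singleton]
  exact M.eRk_contract_add_eRk (Set.disjoint_singleton_right.2 hiA)

lemma matRank_insert_of_isLoop (hi : M.IsLoop i) (A : Finset α) :
    matRank M (insert i A) = matRank M A := by
  rw [← Nat.cast_inj (R := ℕ∞), matRank_eq_eRk, matRank_eq_eRk, Finset.coe_insert,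
    ← Set.union_singleton]
  exact eRk_eq_eRk_union_eRk_le_zero _ hi.eRk_eq.le

lemma matRank_insert_of_isColoop (hi : M.IsColoop i) (hiA : i ∉ A) :
    matRank M (insert i A) = matRank M A + 1 := by
  rw [← Nat.cast_inj (R := ℕ∞), Nat.cast_add, matRank_eq_eRk, matRank_eq_eRk, Finset.coe_insert]
  exact eRk_insert_eq_add_one ⟨hi.mem_ground, hi.notMem_closure_of_notMem hiA⟩

lemma matRank_insert_of_isNonloop (hi : M.IsNonloop i) (hiA : i ∉ A) :
    matRank M (insert i A) = matRank (M ／ {i}) A + 1 := by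
  rw [← matRank_contract_add_matRank M hiA, ← Nat.cast_inj (R := ℕ∞), Nat.cast_add,
    Nat.cast_add, matRank_eq_eRk M, Finset.coe_singleton, hi.eRk_eq, Nat.cast_one]

lemma matRank_erase_groundFinset_of_not_isColoop (hi : ¬ M.IsColoop i) :
    matRank M ((groundFinset M).erase i) = matRank M (groundFinset M) := by
  rw [← Nat.cast_inj (R := ℕ∞), matRank_eq_eRk, matRank_eq_eRk, Finset.coe_erase,
    coe_groundFinset, eRk_ground]
  exact (not_not.1 (mt isColoop_iff_sdiff_not_spanning.2 hi)).eRk_eq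

lemma groundFinset_delete_singleton (M : Matroid α) (i : α) :
    groundFinset (M ＼ {i}) = (groundFinset M).erase i :=
  Finset.coe_injective (by rw [coe_groundFinset, Finset.coe_erase, coe_groundFinset]; rfl)

lemma groundFinset_contract_singleton (M : Matroid α) (i : α) :
    groundFinset (M ／ {i}) = (groundFinset M).erase i :=
  Finset.coe_injective (by rw [coe_groundFinset, Finset.coe_erase, coe_groundFinset]; rfl)

end matRank

noncomputable def gTerm (r n k a : ℕ) : MvPolynomial (Fin 4) ℤ :=
  (X 0 - X 2) ^ (r - k) * (X 1 + X 2) ^ k * (X 1 - X 3) ^ (a - k) *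
    (X 0 + X 3) ^ ((n - a) - (r - k))

lemma gPoly_eq_sum_gTerm [Fintype α] (M : Matroid α) :
    gPoly M = ∑ A ∈ (groundFinset M).powerset,
      gTerm (matRank M (groundFinset M)) (groundFinset M).card (matRank M A) A.card :=
  rfl

section gTerm

variable {r n k a : ℕ}

lemma gTerm_n_succ (h : a + (r - k) ≤ n) :
    gTerm r (n + 1) k a = (X 0 + X 3) * gTerm r n k a := by
  rw [gTerm, gTerm, show n + 1 - a - (r - k) = (n - a - (r - k)) + 1 by omega, pow_succ]
  ring

lemma gTerm_n_succ_a_succ (h : k ≤ a) :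
    gTerm r (n + 1) k (a + 1) = (X 1 - X 3) * gTerm r n k a := by
  rw [gTerm, gTerm, show a + 1 - k = (a - k) + 1 by omega, Nat.add_sub_add_right, pow_succ]
  ring

lemma gTerm_r_succ_n_succ (h : k ≤ r) :
    gTerm (r + 1) (n + 1) k a = (X 0 - X 2) * gTerm r n k a := by
  rw [gTerm, gTerm, show r + 1 - k = (r - k) + 1 by omega,
    show n + 1 - a - (r - k + 1) = n - a - (r - k) by omega, pow_succ]
  ring

lemma gTerm_all_succ : gTerm (r + 1) (n + 1) (k + 1) (a + 1) = (X 1 + X 2) * gTerm r n k a := by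
  simp only [gTerm, Nat.add_sub_add_right, pow_succ]
  ring

end gTerm

section gPoly

variable [Fintype α] [DecidableEq α] {M : Matroid α} {i : α}

lemma gPoly_eq_sum_powerset_erase (hi : i ∈ groundFinset M) :
    gPoly M = ∑ A ∈ ((groundFinset M).erase i).powerset,
      (gTerm (matRank M (groundFinset M)) (((groundFinset M).erase i).card + 1)
          (matRank M A) A.card +
        gTerm (matRank M (groundFinset M)) (((groundFinset M).erase i).card + 1)
          (matRank M (insert i A)) (A.card + 1)) := by
  rw [gPoly_eq_sum_gTerm, Finset.sum_powerset_eq_sum_powerset_erase hi,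
    Finset.card_erase_add_one hi]
  refine Finset.sum_congr rfl fun A hA => ?_
  rw [Finset.card_insert_of_notMem fun h => Finset.notMem_erase i _ (Finset.mem_powerset.1 hA h)]

lemma gPoly_of_isLoop (hi : M.IsLoop i) : gPoly M = (X 0 + X 1) * gPoly (M ＼ {i}) := by
  have hiG : i ∈ groundFinset M := mem_groundFinset.2 hi.mem_ground
  have hr : matRank M (groundFinset M) = matRank M ((groundFinset M).erase i) := by
    rw [← matRank_insert_of_isLoop hi ((groundFinset M).erase i), Finset.insert_erase hiG]
  rw [gPoly_eq_sum_powerset_erase hiG, gPoly_eq_sum_gTerm, groundFinset_delete_singleton,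
    Finset.mul_sum]
  refine Finset.sum_congr rfl fun A hA => ?_
  have hAG := Finset.mem_powerset.1 hA
  have hiA : i ∉ A := fun h => Finset.notMem_erase i _ (hAG h)
  rw [matRank_delete M (Set.disjoint_singleton_right.2 hiA),
    matRank_delete M (Set.disjoint_singleton_right.2 (Finset.notMem_erase i _)), hr,
    matRank_insert_of_isLoop hi, gTerm_n_succ (card_add_matRank_sub_matRank_le M hAG),
    gTerm_n_succ_a_succ (matRank_le_card M A)]
  ring

lemma gPoly_of_isColoop (hi : M.IsColoop i) : gPoly M = (X 0 + X 1) * gPoly (M ／ {i}) := by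
  have hiG : i ∈ groundFinset M := mem_groundFinset.2 hi.mem_ground
  have hr : matRank M (groundFinset M) = matRank (M ／ {i}) ((groundFinset M).erase i) + 1 := by
    rw [← matRank_insert_of_isNonloop hi.isNonloop (Finset.notMem_erase i _),
      Finset.insert_erase hiG]
  rw [gPoly_eq_sum_powerset_erase hiG, gPoly_eq_sum_gTerm, groundFinset_contract_singleton,
    Finset.mul_sum, hr]
  refine Finset.sum_congr rfl fun A hA => ?_
  have hAG := Finset.mem_powerset.1 hA
  have hiA : i ∉ A := fun h => Finset.notMem_erase i _ (hAG h)
  have hrA : matRank M A = matRank (M ／ {i}) A := Nat.add_right_cancel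
    ((matRank_insert_of_isColoop hi hiA).symm.trans (matRank_insert_of_isNonloop hi.isNonloop hiA))
  rw [matRank_insert_of_isNonloop hi.isNonloop hiA, hrA,
    gTerm_r_succ_n_succ (matRank_mono _ hAG), gTerm_all_succ]
  ring

lemma gPoly_of_isNonloop_of_not_isColoop (hl : M.IsNonloop i) (hc : ¬ M.IsColoop i) :
    gPoly M = (X 0 + X 3) * gPoly (M ＼ {i}) + (X 1 + X 2) * gPoly (M ／ {i}) := by
  have hiG : i ∈ groundFinset M := mem_groundFinset.2 hl.mem_ground
  have hrd := matRank_erase_groundFinset_of_not_isColoop hc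
  have hrc : matRank M (groundFinset M) = matRank (M ／ {i}) ((groundFinset M).erase i) + 1 := by
    rw [← matRank_insert_of_isNonloop hl (Finset.notMem_erase i _), Finset.insert_erase hiG]
  rw [gPoly_eq_sum_powerset_erase hiG, gPoly_eq_sum_gTerm (M ＼ {i}), gPoly_eq_sum_gTerm (M ／ {i}),
    groundFinset_delete_singleton, groundFinset_contract_singleton, Finset.mul_sum,
    Finset.mul_sum, ← Finset.sum_add_distrib]
  refine Finset.sum_congr rfl fun A hA => ?_
  have hAG := Finset.mem_powerset.1 hA
  have hiA : i ∉ A := fun h => Finset.notMem_erase i _ (hAG h)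
  have hbound := card_add_matRank_sub_matRank_le M hAG
  rw [hrd] at hbound
  rw [matRank_delete M (Set.disjoint_singleton_right.2 hiA),
    matRank_delete M (Set.disjoint_singleton_right.2 (Finset.notMem_erase i _)), hrd,
    gTerm_n_succ hbound, matRank_insert_of_isNonloop hl hiA, hrc, gTerm_all_succ]

lemma gPoly_of_ncard_ground_eq_one (h : M.E.ncard = 1) : gPoly M = X 0 + X 1 := by
  obtain ⟨i, hi⟩ := Set.ncard_eq_one.1 h
  have hG : groundFinset M = {i} :=
    Finset.coe_injective (by rw [coe_groundFinset, hi, Finset.coe_singleton])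
  have hr : matRank M {i} ≤ 1 := matRank_le_card M {i}
  have h0 : matRank M ∅ = 0 := Nat.le_zero.1 (matRank_le_card M ∅)
  rw [gPoly_eq_sum_gTerm, hG,
    Finset.sum_powerset_eq_sum_powerset_erase (Finset.mem_singleton_self i),
    Finset.erase_singleton, Finset.powerset_empty, Finset.sum_singleton, Finset.insert_empty, h0]
  interval_cases matRank M {i} <;> simp [gTerm]

end gPoly

/-- Deletion–contraction for `t_M` (the quotient of `g_M` by `x + y`): if `|E| = 1` then
`t_M = 1`; if `|E| ≥ 2` and `i ∈ E`, then `t_M = (x+y)·t_{M∖i}` if `i` is a loop,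
`t_M = (x+y)·t_{M/i}` if `i` is a coloop, and `t_M = (x+w)·t_{M∖i} + (y+z)·t_{M/i}`
if `i` is neither a loop nor a coloop. -/
theorem stmt1 [Fintype α] (M : Matroid α)
    (t : MvPolynomial (Fin 4) ℤ) (ht : (X 0 + X 1) * t = gPoly M) :
    (M.E.ncard = 1 → t = 1) ∧
    (2 ≤ M.E.ncard → ∀ i ∈ M.E,
      ∀ td tc : MvPolynomial (Fin 4) ℤ,
        (X 0 + X 1) * td = gPoly (mdelete M {i}) →
        (X 0 + X 1) * tc = gPoly (mcontract M {i}) →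
        ((∀ B, M.IsBase B → i ∉ B) → t = (X 0 + X 1) * td) ∧
        ((∀ B, M.IsBase B → i ∈ B) → t = (X 0 + X 1) * tc) ∧
        ((¬ ∀ B, M.IsBase B → i ∉ B) → (¬ ∀ B, M.IsBase B → i ∈ B) →
          t = (X 0 + X 3) * td + (X 1 + X 2) * tc)) := by
  classical
  have hxy : (X 0 + X 1 : MvPolynomial (Fin 4) ℤ) ≠ 0 := fun h => by
    simpa using congrArg (eval fun _ => (1 : ℤ)) h
  refine ⟨fun h1 => mul_left_cancel₀ hxy ?_, fun _ i hi td tc htd htc => ?_⟩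
  · rw [ht, gPoly_of_ncard_ground_eq_one h1, mul_one]
  change (X 0 + X 1) * td = gPoly (M ＼ {i}) at htd
  change (X 0 + X 1) * tc = gPoly (M ／ {i}) at htc
  rw [← isLoop_iff_forall_notMem_isBase hi, ← isColoop_iff_forall_mem_isBase]
  refine ⟨fun hl => mul_left_cancel₀ hxy ?_, fun hc => mul_left_cancel₀ hxy ?_, fun hl hc => ?_⟩
  · rw [ht, gPoly_of_isLoop hl, htd]
  · rw [ht, gPoly_of_isColoop hc, htc]
  · refine mul_left_cancel₀ hxy ?_
    rw [ht, gPoly_of_isNonloop_of_not_isColoop ((not_isLoop_iff hi).1 hl) hc, ← htd, ← htc]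
    ring
end

section
/- Let M be a matroid on a finite ground set E, let ≤ be a linear order on E, and let B₀ = B_≤(M) be the lex-first basis of M. Then for every function w : E → ℝ that is strictly decreasing with respect to ≤ (i.e. a < b implies w(a) > w(b)) and every basis B′ of M with B′ ≠ B₀, one has ∑_{i∈B′} w(i) < ∑_{i∈B₀} w(i). In particular, B₀ is the unique basis of M maximizing ∑_{i∈B} w(i) simultaneously for all strictly ≤-decreasing weight functions w. -/
/-!
For a basis `B' ≠ B₀`, let `m` be the least element of `B₀ ∆ B'`; by lex-firstness `m ∈ B₀`.
Basis exchange in the dual gives `y ∈ B' \ B₀` such that `B' - y + m` is again a basis. As `y`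
also lies in `B₀ ∆ B'`, `m < y`, so the exchange strictly increases the weight while strictly
shrinking the symmetric difference with `B₀`; induction on `|B₀ ∆ B'|` finishes.
-/

open Matroid

variable {α : Type*}

/-- `B₀` is the lex-first basis of the matroid `M` with respect to the order relation `le`:
it is a basis, and for every other basis `B'`, the `le`-least element of the symmetric
difference `B₀ ∆ B'` belongs to `B₀`. -/
def IsLexFirstBasis (M : Matroid α) (le : α → α → Prop) (B₀ : Set α) : Prop :=
  M.IsBase B₀ ∧ ∀ B', M.IsBase B' → B' ≠ B₀ →
    ∀ m ∈ symmDiff B₀ B', (∀ x ∈ symmDiff B₀ B', le m x) → m ∈ B₀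

theorem Set.Finite.exists_forall_rel {r : α → α → Prop} [IsLinearOrder α r] {S : Set α}
    (hS : S.Finite) (hne : S.Nonempty) : ∃ m ∈ S, ∀ x ∈ S, r m x := by
  induction S, hS using Set.Finite.induction_on with
  | empty => exact absurd hne Set.not_nonempty_empty
  | @insert a s _ _ ih =>
    rcases s.eq_empty_or_nonempty with rfl | hs
    · exact ⟨a, by simp [refl_of r a]⟩
    obtain ⟨m, hm, hmin⟩ := ih hs
    rcases total_of r a m with ham | hma
    · exact ⟨a, by simp, by
        simpa [refl_of r a] using fun x hx => trans_of r ham (hmin x hx)⟩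
    · exact ⟨m, by simp [hm], by simpa [hma] using hmin⟩

namespace Matroid

variable {M : Matroid α} {B₁ B₂ : Set α} {m : α}

-- The exchange axiom in `M✶`, applied to the complements `M.E \ B₂` and `M.E \ B₁`.
theorem IsBase.rev_exchange (hB₁ : M.IsBase B₁) (hB₂ : M.IsBase B₂) (hm : m ∈ B₁ \ B₂) :
    ∃ y ∈ B₂ \ B₁, M.IsBase (insert m (B₂ \ {y})) := by
  have hmE : m ∈ M.E := hB₁.subset_ground hm.1
  obtain ⟨y, ⟨⟨hyE, hyB₁⟩, hyB₂⟩, hB⟩ :=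
    hB₂.compl_isBase_dual.exchange hB₁.compl_isBase_dual ⟨⟨hmE, hm.2⟩, fun h => h.2 hm.1⟩
  have hyB₂ : y ∈ B₂ := by simpa [hyE] using hyB₂
  refine ⟨y, ⟨hyB₂, hyB₁⟩, ?_⟩
  convert hB.compl_isBase_of_dual using 1
  ext x
  have := @hB₂.subset_ground
  simp only [Set.mem_insert_iff, Set.mem_sdiff, Set.mem_singleton_iff]
  grind

end Matroid

theorem finsum_mem_insert_sdiff_singleton {β : Type*} [AddCommMonoid β] (f : α → β)
    {s : Set α} {a b : α} (hs : s.Finite) (ha : a ∉ s) (hb : b ∈ s) :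
    ∑ᶠ i ∈ insert a (s \ {b}), f i + f b = f a + ∑ᶠ i ∈ s, f i := by
  rw [finsum_mem_insert f (fun h => ha h.1) (hs.subset Set.sdiff_subset), add_assoc,
    add_comm _ (f b), ← finsum_mem_singleton (f := f) (a := b),
    finsum_mem_add_sdiff (Set.singleton_subset_iff.2 hb) hs]

namespace IsLexFirstBasis

variable {M : Matroid α} {le : α → α → Prop} [IsLinearOrder α le] [M.RankFinite]
  {B₀ B' : Set α} {w : α → ℝ}

theorem exists_isBase_finsum_lt (hB₀ : IsLexFirstBasis M le B₀)
    (hw : ∀ a b, le a b → a ≠ b → w b < w a) (hB' : M.IsBase B') (hne : B' ≠ B₀) :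
    ∃ B'', M.IsBase B'' ∧ ∑ᶠ i ∈ B', w i < ∑ᶠ i ∈ B'', w i ∧
      symmDiff B₀ B'' ⊂ symmDiff B₀ B' := by
  obtain ⟨m, hmS, hmin⟩ := (hB₀.1.finite.symmDiff hB'.finite).exists_forall_rel (r := le)
    (Set.symmDiff_nonempty.2 hne.symm)
  have hmB₀ : m ∈ B₀ := hB₀.2 B' hB' hne m hmS hmin
  have hmB' : m ∉ B' := fun h => (Set.mem_symmDiff.1 hmS).elim (·.2 h) (·.2 hmB₀)
  obtain ⟨y, hy, hB''⟩ := hB₀.1.rev_exchange hB' ⟨hmB₀, hmB'⟩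
  have hym : y ≠ m := fun h => hy.2 (h ▸ hmB₀)
  have hwy : w y < w m := hw m y (hmin y (Or.inr hy)) hym.symm
  refine ⟨_, hB'', ?_, ?_⟩
  · have := finsum_mem_insert_sdiff_singleton w hB'.finite hmB' hy.1
    linarith
  · refine (Set.ssubset_iff_of_subset fun x hx => ?_).2 ⟨m, hmS, fun h => ?_⟩
    · simp only [Set.mem_symmDiff, Set.mem_insert_iff, Set.mem_sdiff,
        Set.mem_singleton_iff] at hx ⊢
      grind
    · simp [Set.mem_symmDiff, hmB₀] at h

theorem finsum_lt (hB₀ : IsLexFirstBasis M le B₀) (hw : ∀ a b, le a b → a ≠ b → w b < w a)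
    (hB' : M.IsBase B') (hne : B' ≠ B₀) : ∑ᶠ i ∈ B', w i < ∑ᶠ i ∈ B₀, w i := by
  induction h : (symmDiff B₀ B').ncard using Nat.strong_induction_on generalizing B' with
  | _ n ih =>
    obtain ⟨B'', hB'', hlt, hsub⟩ := hB₀.exists_isBase_finsum_lt hw hB' hne
    obtain rfl | hne'' := eq_or_ne B'' B₀
    · exact hlt
    have hcard := Set.ncard_lt_ncard hsub (hB₀.1.finite.symmDiff hB'.finite)
    exact hlt.trans (ih _ (h ▸ hcard) hB'' hne'' rfl)

end IsLexFirstBasis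

/-- The lex-first basis `B₀` of a matroid (w.r.t. a linear order `le`) strictly maximizes
`∑_{i ∈ B} w i` among all bases, for every weight function `w` that is strictly decreasing
with respect to `le`. -/
theorem stmt8 [Fintype α] (M : Matroid α) (le : α → α → Prop)
    (hlin : IsLinearOrder α le)
    (B₀ : Set α) (hB₀ : IsLexFirstBasis M le B₀)
    (w : α → ℝ) (hw : ∀ a b, le a b → a ≠ b → w b < w a)
    (B' : Set α) (hB' : M.IsBase B') (hne : B' ≠ B₀) :
    ∑ᶠ i ∈ B', w i < ∑ᶠ i ∈ B₀, w i := by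
  have := hlin
  exact hB₀.finsum_lt hw hB' hne
end

section
/- Let M be a matroid on a finite ground set E, let ≤ be a linear order on E, let a, b ∈ E with a < b and no element strictly between a and b in ≤, and let ≤′ be the linear order obtained from ≤ by swapping a and b (so b immediately precedes a in ≤′ and all other comparisons are unchanged). Then either B_≤(M) = B_{≤′}(M), or the symmetric difference B_≤(M) △ B_{≤′}(M) equals {a, b}. -/
open Matroid

variable {α : Type*}

/-!
The lex-first basis is the greedy one: `x ∈ B` iff `x ∈ M.E` and `x` is not spanned by the
elements strictly below it. Swapping the adjacent elements `a, b` does not change the set of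
elements below any `x ∉ {a, b}`, so the two bases agree off `{a, b}`. With `P` the set of elements
below `a`, the element `a` lies in exactly one of the bases iff `a ∈ cl (P ∪ {b}) \ cl P`, and `b`
does iff `b ∈ cl (P ∪ {a}) \ cl P`; these are equivalent by the Mac Lane–Steinitz exchange property.
-/

open Function

lemma Set.eq_or_symmDiff_eq_pair {s t : Set α} {a b : α} (hsub : symmDiff s t ⊆ {a, b})
    (hab : a ∈ symmDiff s t ↔ b ∈ symmDiff s t) : s = t ∨ symmDiff s t = {a, b} := by
  by_cases ha : a ∈ symmDiff s t
  · exact Or.inr (hsub.antisymm (Set.insert_subset ha (Set.singleton_subset_iff.2 (hab.1 ha))))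
  · refine Or.inl (symmDiff_eq_bot.1 (Set.eq_empty_iff_forall_notMem.2 fun x hx => ?_))
    rcases hsub hx with rfl | rfl
    · exact ha hx
    · exact ha (hab.2 hx)

lemma Equiv.swap_preimage_eq_self [DecidableEq α] {s : Set α} {a b : α} (h : a ∈ s ↔ b ∈ s) :
    Equiv.swap a b ⁻¹' s = s := by
  ext x
  rcases eq_or_ne x a with rfl | hxa
  · simpa using h.symm
  rcases eq_or_ne x b with rfl | hxb
  · simpa using h
  · simp [Equiv.swap_apply_of_ne_of_ne hxa hxb]

def strictLowerSet (le : α → α → Prop) (x : α) : Set α := {y | le y x ∧ y ≠ x}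

lemma strictLowerSet_onFun {β : Type*} {r : β → β → Prop} {f : α → β} (hf : f.Injective)
    (x : α) : strictLowerSet (r on f) x = f ⁻¹' strictLowerSet r (f x) := by
  ext y
  exact and_congr_right fun _ => hf.ne_iff.symm

section Order

variable {le : α → α → Prop} [IsLinearOrder α le]

lemma strictLowerSet_subset_of_mem {x y : α} (hy : y ∈ strictLowerSet le x) :
    strictLowerSet le y ⊆ strictLowerSet le x :=
  fun z hz => ⟨trans_of le hz.1 hy.1,
    by rintro rfl; exact hy.2 (antisymm_of le hy.1 hz.1)⟩

lemma notMem_strictLowerSet_iff {x y : α} : y ∉ strictLowerSet le x ↔ le x y := by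
  refine ⟨fun h => ?_, fun hxy hy => hy.2 (antisymm_of le hy.1 hxy)⟩
  rcases eq_or_ne y x with rfl | hne
  · exact refl_of le y
  · exact (total_of le x y).resolve_right fun hyx => h ⟨hyx, hne⟩

variable {a b : α} (hab : le a b) (hadj : ∀ c, le a c → le c b → c = a ∨ c = b)
include hab hadj

lemma mem_strictLowerSet_iff_of_adjacent {x : α} (hxa : x ≠ a) (hxb : x ≠ b) :
    a ∈ strictLowerSet le x ↔ b ∈ strictLowerSet le x := by
  refine ⟨fun ha => ⟨?_, hxb.symm⟩, fun hb => ⟨trans_of le hab hb.1, hxa.symm⟩⟩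
  refine (total_of le b x).resolve_right fun hxb' => ?_
  exact (hadj x ha.1 hxb').elim hxa hxb

lemma strictLowerSet_eq_insert_of_adjacent (hne : a ≠ b) :
    strictLowerSet le b = insert a (strictLowerSet le a) := by
  ext y
  refine ⟨fun hy => ?_, ?_⟩
  · rcases eq_or_ne y a with rfl | hya
    · exact Set.mem_insert y _
    refine Or.inr ⟨(total_of le y a).resolve_right fun hay => ?_, hya⟩
    exact (hadj y hay hy.1).elim hya hy.2
  · rintro (rfl | hy)
    · exact ⟨hab, hne⟩
    · exact ⟨trans_of le hy.1 hab, by rintro rfl; exact hy.2 (antisymm_of le hy.1 hab)⟩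

end Order

namespace Matroid

variable {M : Matroid α} {X s t : Set α}

lemma mem_symmDiff_iff_mem_closure_insert_sdiff {e f : α}
    (hs : e ∈ s ↔ e ∈ M.E ∧ e ∉ M.closure X)
    (ht : e ∈ t ↔ e ∈ M.E ∧ e ∉ M.closure (insert f X)) :
    e ∈ symmDiff s t ↔ e ∈ M.closure (insert f X) \ M.closure X := by
  have hmono : e ∈ M.closure X → e ∈ M.closure (insert f X) :=
    fun he => M.closure_subset_closure (Set.subset_insert f X) he
  have hground : e ∈ M.closure (insert f X) → e ∈ M.E := fun he => M.closure_subset_ground _ he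
  rw [Set.mem_symmDiff, hs, ht, Set.mem_sdiff]
  tauto

lemma mem_symmDiff_iff_of_closure_exchange {a b : α}
    (hsa : a ∈ s ↔ a ∈ M.E ∧ a ∉ M.closure X)
    (hta : a ∈ t ↔ a ∈ M.E ∧ a ∉ M.closure (insert b X))
    (hsb : b ∈ s ↔ b ∈ M.E ∧ b ∉ M.closure (insert a X))
    (htb : b ∈ t ↔ b ∈ M.E ∧ b ∉ M.closure X) :
    a ∈ symmDiff s t ↔ b ∈ symmDiff s t := by
  rw [mem_symmDiff_iff_mem_closure_insert_sdiff hsa hta, closure_exchange_iff, symmDiff_comm,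
    mem_symmDiff_iff_mem_closure_insert_sdiff htb hsb]

end Matroid

namespace IsLexFirstBasis

variable {M : Matroid α} {le : α → α → Prop} [IsLinearOrder α le] {B : Set α}

lemma mem_closure_of_notMem (h : IsLexFirstBasis M le B) {e : α} (heE : e ∈ M.E) (heB : e ∉ B) :
    e ∈ M.closure (B ∩ strictLowerSet le e) := by
  set I := B ∩ strictLowerSet le e
  by_contra hcl
  have heI : e ∉ I := fun he => he.2.2 rfl
  have hins : M.Indep (insert e I) := by
    rw [(h.1.indep.subset Set.inter_subset_left).insert_indep_iff_of_notMem heI]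
    exact ⟨heE, hcl⟩
  have hEB : insert e B ⊆ M.E := Set.insert_subset heE h.1.subset_ground
  obtain ⟨J, hJ, hIJ⟩ := hins.subset_isBasis_of_subset
    (Set.insert_subset_insert Set.inter_subset_left) hEB
  have hJbase : M.IsBase J := by
    refine hJ.indep.isBase_of_spanning ?_
    rw [spanning_iff_closure_eq hJ.indep.subset_ground, hJ.closure_eq_closure]
    exact (h.1.spanning.superset (Set.subset_insert _ _) hEB).closure_eq
  have heJ : e ∈ J := hIJ (Set.mem_insert _ _)
  -- `J` agrees with `B` below `e` and adds `e`, so `e` is the least element of `B ∆ J`.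
  have hmin : ∀ x ∈ symmDiff B J, le e x := by
    rintro x (⟨hxB, hxJ⟩ | ⟨hxJ, hxB⟩)
    · exact notMem_strictLowerSet_iff.1 fun hx => hxJ (hIJ (Set.mem_insert_of_mem _ ⟨hxB, hx⟩))
    · rcases hJ.subset hxJ with rfl | hxB'
      · exact refl_of le x
      · exact absurd hxB' hxB
  exact heB (h.2 J hJbase (fun hJB => heB (hJB ▸ heJ)) e (Or.inr ⟨heJ, heB⟩) hmin)

lemma closure_inter_strictLowerSet (h : IsLexFirstBasis M le B) (x : α) :
    M.closure (B ∩ strictLowerSet le x) = M.closure (strictLowerSet le x) := by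
  refine (M.closure_subset_closure Set.inter_subset_right).antisymm ?_
  rw [← closure_inter_ground]
  refine M.closure_subset_closure_of_subset_closure fun y ⟨hy, hyE⟩ => ?_
  by_cases hyB : y ∈ B
  · exact M.mem_closure_of_mem' ⟨hyB, hy⟩
  · exact M.closure_subset_closure (Set.inter_subset_inter_right _ (strictLowerSet_subset_of_mem hy))
      (h.mem_closure_of_notMem hyE hyB)

lemma mem_iff (h : IsLexFirstBasis M le B) (x : α) :
    x ∈ B ↔ x ∈ M.E ∧ x ∉ M.closure (strictLowerSet le x) := by
  rw [← h.closure_inter_strictLowerSet]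
  refine ⟨fun hx => ⟨h.1.subset_ground hx, fun hcl => ?_⟩, fun ⟨hxE, hcl⟩ => ?_⟩
  · exact h.1.indep.notMem_closure_sdiff_of_mem hx
      (M.closure_subset_closure (show B ∩ strictLowerSet le x ⊆ B \ {x} from
        fun _ hy => ⟨hy.1, hy.2.2⟩) hcl)
  · by_contra hx
    exact hcl (h.mem_closure_of_notMem hxE hx)

end IsLexFirstBasis

section AdjacentSwap

variable [DecidableEq α] {le : α → α → Prop} [IsLinearOrder α le] {a b : α} (hab : le a b)
include hab

lemma strictLowerSet_swap_of_ne (hadj : ∀ c, le a c → le c b → c = a ∨ c = b) {x : α}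
    (hxa : x ≠ a) (hxb : x ≠ b) :
    strictLowerSet (le on Equiv.swap a b) x = strictLowerSet le x := by
  rw [strictLowerSet_onFun (Equiv.swap a b).injective, Equiv.swap_apply_of_ne_of_ne hxa hxb,
    Equiv.swap_preimage_eq_self (mem_strictLowerSet_iff_of_adjacent hab hadj hxa hxb)]

lemma swap_preimage_strictLowerSet_left (hne : a ≠ b) :
    Equiv.swap a b ⁻¹' strictLowerSet le a = strictLowerSet le a :=
  Equiv.swap_preimage_eq_self
    (iff_of_false (fun h => h.2 rfl) fun h => hne (antisymm_of le hab h.1))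

lemma strictLowerSet_swap_right (hne : a ≠ b) :
    strictLowerSet (le on Equiv.swap a b) b = strictLowerSet le a := by
  rw [strictLowerSet_onFun (Equiv.swap a b).injective, Equiv.swap_apply_right,
    swap_preimage_strictLowerSet_left hab hne]

lemma strictLowerSet_swap_left (hne : a ≠ b) (hadj : ∀ c, le a c → le c b → c = a ∨ c = b) :
    strictLowerSet (le on Equiv.swap a b) a = insert b (strictLowerSet le a) := by
  ext y
  rw [strictLowerSet_onFun (Equiv.swap a b).injective, Equiv.swap_apply_left,
    strictLowerSet_eq_insert_of_adjacent hab hadj hne, Set.mem_preimage, Set.mem_insert_iff,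
    Equiv.swap_apply_eq_iff, Equiv.swap_apply_left, ← Set.mem_preimage,
    swap_preimage_strictLowerSet_left hab hne, Set.mem_insert_iff]

end AdjacentSwap

theorem stmt9_general [DecidableEq α] (M : Matroid α)
    (le : α → α → Prop) (hlin : IsLinearOrder α le)
    (a b : α) (hab : le a b) (hne : a ≠ b)
    (hadj : ∀ c, le a c → le c b → c = a ∨ c = b)
    (le' : α → α → Prop)
    (hle' : ∀ x y, le' x y ↔ le (Equiv.swap a b x) (Equiv.swap a b y))
    (B₁ B₂ : Set α)
    (h₁ : IsLexFirstBasis M le B₁) (h₂ : IsLexFirstBasis M le' B₂) :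
    B₁ = B₂ ∨ symmDiff B₁ B₂ = {a, b} := by
  obtain rfl : le' = (le on Equiv.swap a b) := funext₂ fun x y => propext (hle' x y)
  have := (Equiv.swap a b).injective.isLinearOrder_onFun (r := le)
  refine Set.eq_or_symmDiff_eq_pair (fun x hx => ?_) ?_
  · by_contra hxab
    rw [Set.mem_insert_iff, Set.mem_singleton_iff, not_or] at hxab
    have hx₁₂ : x ∈ B₁ ↔ x ∈ B₂ := by
      rw [h₁.mem_iff, h₂.mem_iff, strictLowerSet_swap_of_ne hab hadj hxab.1 hxab.2]
    exact hx.elim (fun h => h.2 (hx₁₂.1 h.1)) fun h => h.2 (hx₁₂.2 h.1)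
  · exact Matroid.mem_symmDiff_iff_of_closure_exchange (h₁.mem_iff a)
      (by rw [h₂.mem_iff, strictLowerSet_swap_left hab hne hadj])
      (by rw [h₁.mem_iff, strictLowerSet_eq_insert_of_adjacent hab hadj hne])
      (by rw [h₂.mem_iff, strictLowerSet_swap_right hab hne])

/-- If the linear orders `le` and `le'` differ by swapping two adjacent elements `a < b`,
then the corresponding lex-first bases of `M` either coincide or have symmetric
difference `{a, b}`. -/
theorem stmt9 [Fintype α] [DecidableEq α] (M : Matroid α)
    (le : α → α → Prop) (hlin : IsLinearOrder α le)
    (a b : α) (hab : le a b) (hne : a ≠ b)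
    (hadj : ∀ c, le a c → le c b → c = a ∨ c = b)
    (le' : α → α → Prop)
    (hle' : ∀ x y, le' x y ↔ le (Equiv.swap a b x) (Equiv.swap a b y))
    (B₁ B₂ : Set α)
    (h₁ : IsLexFirstBasis M le B₁) (h₂ : IsLexFirstBasis M le' B₂) :
    B₁ = B₂ ∨ symmDiff B₁ B₂ = {a, b} :=
  stmt9_general M le hlin a b hab hne hadj le' hle' B₁ B₂ h₁ h₂
end

section
/- Let M be a matroid on a finite ground set E and let ≤ be a linear order on E with reverse order ≤ᵒᵖ (x ≤ᵒᵖ y iff y ≤ x). Then the lex-first basis of the dual matroid satisfies B_≤(M✶) = E ∖ B_{≤ᵒᵖ}(M). -/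
open Matroid

variable {α : Type*}

/-!
The complement `M.E \ Bop` is a basis of `M✶`, and it is lex-first: if some cobasis `B'`
beat it, the least element `m` of the symmetric difference would lie in `B' ∩ Bop`.
Exchanging `m` out of `Bop` against the basis `M.E \ B'` brings in some `f ∉ B' ∪ Bop`, which
also lies in the symmetric difference, so `m < f`; but then the basis `Bop - m + f` beats
`Bop` in the reversed order. Lex-first bases of a finite matroid are unique, so `B = M.E \ Bop`.
-/

lemma exists_least_of_isLinearOrder [Finite α] (le : α → α → Prop) [IsLinearOrder α le]
    {S : Set α} (hS : S.Nonempty) : ∃ m ∈ S, ∀ x ∈ S, le m x := by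
  let lt : α → α → Prop := fun a b => le a b ∧ a ≠ b
  have : Std.Irrefl lt := ⟨fun a h => h.2 rfl⟩
  have : IsTrans α lt := ⟨fun a b c hab hbc =>
    ⟨trans_of le hab.1 hbc.1, fun h => hbc.2 (antisymm_of le hbc.1 (h ▸ hab.1))⟩⟩
  obtain ⟨m, hm, hmin⟩ := (Finite.wellFounded_of_trans_of_irrefl lt).has_min S hS
  refine ⟨m, hm, fun x hx => ?_⟩
  by_cases hxm : x = m
  · exact hxm ▸ refl_of le m
  · exact (total_of le m x).resolve_right fun hxm' => hmin x hx ⟨hxm', hxm⟩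

lemma Set.symmDiff_insert_diff_singleton {B : Set α} {m f : α} (hm : m ∈ B) (hf : f ∉ B) :
    symmDiff B (insert f (B \ {m})) = {m, f} := by
  ext x
  by_cases hxm : x = m <;> by_cases hxf : x = f <;> simp_all [Set.mem_symmDiff]

namespace IsLexFirstBasis

variable {M : Matroid α} {le : α → α → Prop}

lemma eq [Finite α] [IsLinearOrder α le] {B₁ B₂ : Set α} (h₁ : IsLexFirstBasis M le B₁)
    (h₂ : IsLexFirstBasis M le B₂) : B₁ = B₂ := by
  by_contra hne
  obtain ⟨m, hm, hleast⟩ := exists_least_of_isLinearOrder le (Set.symmDiff_nonempty.2 hne)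
  have hm₁ := h₁.2 B₂ h₂.1 (Ne.symm hne) m hm hleast
  rw [symmDiff_comm] at hm hleast
  have hm₂ := h₂.2 B₁ h₁.1 hne m hm hleast
  rcases Set.mem_symmDiff.1 hm with h | h
  · exact h.2 hm₁
  · exact h.2 hm₂

lemma not_le_of_exchange [Std.Refl le] {B₀ : Set α} {m f : α} (h : IsLexFirstBasis M le B₀)
    (hm : m ∈ B₀) (hf : f ∉ B₀) (hB : M.IsBase (insert f (B₀ \ {m}))) : ¬ le f m := by
  intro hfm
  have hne : insert f (B₀ \ {m}) ≠ B₀ := fun h => hf (h ▸ Set.mem_insert f _)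
  refine hf (h.2 _ hB hne f ?_ ?_) <;> rw [Set.symmDiff_insert_diff_singleton hm hf]
  · exact Set.mem_insert_of_mem m rfl
  · rintro x (rfl | rfl)
    exacts [hfm, refl_of le x]

lemma compl_dual [Std.Refl le] {Bop : Set α} (h : IsLexFirstBasis M (fun x y => le y x) Bop) :
    IsLexFirstBasis M✶ le (M.E \ Bop) := by
  refine ⟨h.1.compl_isBase_dual, fun B' hB' _ m hm hleast => ?_⟩
  by_contra hmE
  have hmB' : m ∈ B' := ((Set.mem_symmDiff.1 hm).resolve_left fun h => hmE h.1).1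
  have hmBop : m ∈ Bop := by_contra fun hmBop => hmE ⟨hB'.subset_ground hmB', hmBop⟩
  obtain ⟨f, ⟨hfB', hfBop⟩, hfB⟩ :=
    h.1.exchange hB'.compl_isBase_of_dual ⟨hmBop, fun h => h.2 hmB'⟩
  exact h.not_le_of_exchange hmBop hfBop hfB (hleast f (Or.inl ⟨⟨hfB'.1, hfBop⟩, hfB'.2⟩))

end IsLexFirstBasis

/-- The lex-first basis of the dual matroid w.r.t. a linear order `le` is the complement in
the ground set of the lex-first basis of `M` w.r.t. the reversed order. -/
theorem stmt12 [Fintype α] (M : Matroid α)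
    (le : α → α → Prop) (hlin : IsLinearOrder α le)
    (B Bop : Set α)
    (hB : IsLexFirstBasis M✶ le B)
    (hBop : IsLexFirstBasis M (fun x y => le y x) Bop) :
    B = M.E \ Bop :=
  haveI := hlin
  hB.eq hBop.compl_dual
end

section
/- Let M be a matroid on a finite ground set E, let ∅ = S₀ ⊊ S₁ ⊊ ⋯ ⊊ S_k ⊊ S_{k+1} = E be a chain of subsets, and let ≤ be a linear order on E such that every element of S_{i+1}∖S_i precedes every element of S_{j+1}∖S_j whenever i < j. Then B_≤(M) = ⋃_{i=0}^{k} B_{≤ᵢ}(M|S_{i+1}/S_i), where ≤ᵢ denotes the restriction of ≤ to S_{i+1}∖S_i and M|S_{i+1}/S_i is the minor of M on ground set S_{i+1}∖S_i obtained by restricting to S_{i+1} and contracting S_i. -/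
open Matroid

variable {α : Type*}

/-!
Since the blocks `S_{i+1} ∖ S_i` come one after the other in the order, every `S_i` is an
initial segment of `E`. The lex-first basis `B` is greedy, so `B ∩ S_i` is a basis of `S_i`
(otherwise exchanging in an element of `S_i` would produce a basis whose difference with `B`
starts outside `B`). Consequently `B ∩ (S_{i+1} ∖ S_i)` is a basis of `M|S_{i+1}/S_i`, and
any other basis `B₂` of that minor can be completed by `B ∩ S_i` and `B ∖ S_{i+1}` to a basis
`B'` of `M` with `B ∆ B' = (B ∩ (S_{i+1} ∖ S_i)) ∆ B₂`; so the lex-first property of `B`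
transfers to the minor. Lex-first bases are unique, which identifies the two sides.
-/

open Set

lemma Set.Finite.exists_forall_rel_s13 {le : α → α → Prop} [IsPreorder α le] [Std.Total le]
    {s : Set α} (hs : s.Finite) (hne : s.Nonempty) : ∃ m ∈ s, ∀ x ∈ s, le m x := by
  let : LE α := ⟨le⟩
  have : IsTrans α fun a b : α => b ≤ a := ⟨fun _ _ _ hab hbc => trans_of le hbc hab⟩
  obtain ⟨m, hm, hmin⟩ := hs.exists_minimal hne
  exact ⟨m, hm, fun x hx => (total_of le m x).elim id (hmin hx)⟩

lemma mcontract_eq_contract (M : Matroid α) (C : Set α) : mcontract M C = M ／ C := rfl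

lemma Matroid.IsBasis.contract_isBase_iff {M : Matroid α} {I X B : Set α}
    (hI : M.IsBasis I X) : (M ／ X).IsBase B ↔ M.IsBase (B ∪ I) ∧ Disjoint B X := by
  have hcoindep : (M ／ I).Coindep (X \ I) :=
    (M ／ I)✶.coloops_indep.subset (by rw [dual_coloops]; exact hI.sdiff_subset_loops_contract)
  rw [hI.contract_eq_contract_delete, hcoindep.delete_isBase_iff, hI.indep.contract_isBase_iff,
    and_assoc, ← disjoint_union_right, union_sdiff_cancel hI.subset]

namespace IsLexFirstBasis

variable {M : Matroid α} {le : α → α → Prop} {B : Set α}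

theorem unique [M.RankFinite] [IsPreorder α le] [Std.Total le] {B₁ B₂ : Set α}
    (h₁ : IsLexFirstBasis M le B₁) (h₂ : IsLexFirstBasis M le B₂) : B₁ = B₂ := by
  by_contra hne
  have hfin : (symmDiff B₁ B₂).Finite :=
    (h₁.1.finite.union h₂.1.finite).subset symmDiff_subset_union
  obtain ⟨m, hm, hmin⟩ := hfin.exists_forall_rel_s13 (le := le) (symmDiff_nonempty.2 hne)
  have hm₁ := h₁.2 B₂ h₂.1 (Ne.symm hne) m hm hmin
  rw [symmDiff_comm] at hm hmin
  have hm₂ := h₂.2 B₁ h₁.1 hne m hm hmin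
  rcases mem_symmDiff.1 hm with h | h <;> tauto

theorem isBasis_inter [Std.Refl le] (hB : IsLexFirstBasis M le B) {S : Set α} (hSE : S ⊆ M.E)
    (hS : ∀ x ∈ S, ∀ y ∈ M.E \ S, le x y) : M.IsBasis (B ∩ S) S := by
  by_contra hnot
  obtain ⟨J, hJ⟩ := M.exists_isBasis S hSE
  obtain ⟨e, ⟨heJ, heBS⟩, hins⟩ :=
    (hB.1.indep.inter_right S).exists_insert_of_not_isBasis inter_subset_right hnot hJ
  have heS : e ∈ S := hJ.subset heJ
  have heB : e ∉ B := fun h => heBS ⟨h, heS⟩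
  obtain ⟨B', hB', hsub, hsup⟩ := hins.exists_isBase_subset_union_isBase hB.1
  have heB' : e ∈ B' := hsub (mem_insert e _)
  have hsd : ∀ x ∈ symmDiff B B', x = e ∨ x ∈ M.E \ S := by
    rintro x (⟨hxB, hxB'⟩ | ⟨hxB', hxB⟩)
    · exact Or.inr ⟨hB.1.subset_ground hxB,
        fun hxS => hxB' (hsub (mem_insert_of_mem e ⟨hxB, hxS⟩))⟩
    · rcases hsup hxB' with (rfl | h) | h
      · exact Or.inl rfl
      · exact absurd h.1 hxB
      · exact absurd h hxB
  refine heB (hB.2 B' hB' (ne_of_mem_of_not_mem' heB' heB) e (Or.inr ⟨heB', heB⟩) fun x hx => ?_)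
  rcases hsd x hx with rfl | hxS
  · exact refl_of le x
  · exact hS e heS x hxS

theorem restrict_contract (hB : IsLexFirstBasis M le B) {S T : Set α} (hST : S ⊆ T) (hTE : T ⊆ M.E)
    (hBS : M.IsBasis (B ∩ S) S) (hBT : M.IsBasis (B ∩ T) T) :
    IsLexFirstBasis ((M ↾ T) ／ S) le (B ∩ (T \ S)) := by
  have hbase : ∀ {B₂}, ((M ↾ T) ／ S).IsBase B₂ ↔
      M.IsBasis (B₂ ∪ B ∩ S) T ∧ Disjoint B₂ S := by
    intro B₂
    rw [(hBS.isBasis_restrict_of_subset hST).contract_isBase_iff, isBase_restrict_iff hTE]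
  refine ⟨hbase.2 ⟨?_, disjoint_sdiff_left.mono_left inter_subset_right⟩, ?_⟩
  · rwa [← inter_union_distrib_left, sdiff_union_of_subset hST]
  intro B₂ hB₂ hne m hm hmin
  obtain ⟨hJ, hB₂S⟩ := hbase.1 hB₂
  have hB₂T : B₂ ⊆ T := subset_union_left.trans hJ.subset
  have hB' : M.IsBase ((B \ T) ∪ (B₂ ∪ B ∩ S)) :=
    (hJ.contract_isBase_iff.1 (hBT.contract_isBase_iff.2
      ⟨by rw [sdiff_union_inter]; exact hB.1, disjoint_sdiff_left⟩)).1
  have hsd : symmDiff B ((B \ T) ∪ (B₂ ∪ B ∩ S)) = symmDiff (B ∩ (T \ S)) B₂ := by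
    ext x
    have := @hB₂T x
    have := @hST x
    have : x ∈ B₂ → x ∉ S := fun h => disjoint_left.1 hB₂S h
    simp only [mem_symmDiff, mem_union, mem_inter_iff, mem_sdiff]
    tauto
  rw [← hsd] at hm hmin
  have hmB := hB.2 _ hB' (fun h => by simp [h] at hm) m hm hmin
  rw [hsd] at hm
  rcases mem_symmDiff.1 hm with h | h
  · exact h.1
  · exact ⟨hmB, hB₂T h.1, disjoint_left.1 hB₂S h.1⟩

end IsLexFirstBasis

lemma Fin.exists_mem_succ_sdiff_castSucc {n : ℕ} (S : Fin (n + 1) → Set α) (h0 : S 0 = ∅)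
    {x : α} (hx : x ∈ S (Fin.last n)) : ∃ j : Fin n, x ∈ S j.succ \ S j.castSucc := by
  by_contra! h
  have hnot : ∀ i, x ∉ S i :=
    Fin.induction (h0 ▸ notMem_empty x) fun i hi hsucc => h i ⟨hsucc, hi⟩
  exact hnot _ hx

lemma Monotone.forall_rel_of_blocks {le : α → α → Prop} {n : ℕ} {E : Set α}
    {S : Fin (n + 1) → Set α} (hmono : Monotone S) (h0 : S 0 = ∅) (hlast : S (Fin.last n) = E)
    (hblocks : ∀ i j : Fin n, i < j →
      ∀ x ∈ S i.succ \ S i.castSucc, ∀ y ∈ S j.succ \ S j.castSucc, le x y)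
    (t : Fin (n + 1)) : ∀ x ∈ S t, ∀ y ∈ E \ S t, le x y := by
  rintro x hx y ⟨hyE, hyt⟩
  obtain ⟨i, hxi⟩ := Fin.exists_mem_succ_sdiff_castSucc S h0 (hmono (Fin.le_last t) hx)
  obtain ⟨j, hyj⟩ := Fin.exists_mem_succ_sdiff_castSucc S h0 (hlast ▸ hyE)
  have hit : i.castSucc < t := lt_of_not_ge fun h => hxi.2 (hmono h hx)
  have htj : t < j.succ := lt_of_not_ge fun h => hyt (hmono h hyj.1)
  refine hblocks i j ?_ x hxi y hyj
  rw [Fin.lt_def] at hit htj ⊢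
  simp only [Fin.val_castSucc, Fin.val_succ] at hit htj
  omega

/-- For a chain `∅ = S₀ ⊊ S₁ ⊊ ⋯ ⊊ S_{k+1} = E` and a linear order in which the blocks
`S_{i+1} ∖ S_i` appear consecutively in increasing order of `i`, the lex-first basis of `M`
is the union over `i` of the lex-first bases of the minors `M|S_{i+1}/S_i`. -/
theorem stmt13 [Fintype α] (M : Matroid α) (k : ℕ)
    (S : Fin (k + 2) → Set α) (hS0 : S 0 = ∅) (hSlast : S (Fin.last (k + 1)) = M.E)
    (hchain : ∀ i : Fin (k + 1), S i.castSucc ⊂ S i.succ)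
    (le : α → α → Prop) (hlin : IsLinearOrder α le)
    (hcompat : ∀ i j : Fin (k + 1), i < j →
      ∀ x ∈ S i.succ \ S i.castSucc, ∀ y ∈ S j.succ \ S j.castSucc, le x y ∧ x ≠ y)
    (B : Set α) (hB : IsLexFirstBasis M le B)
    (Bm : Fin (k + 1) → Set α)
    (hBm : ∀ i, IsLexFirstBasis (mcontract (M ↾ S i.succ) (S i.castSucc)) le (Bm i)) :
    B = ⋃ i, Bm i := by
  simp only [mcontract_eq_contract] at hBm
  have hmono : Monotone S := Fin.monotone_iff_le_succ.2 fun i => (hchain i).subset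
  have hSE : ∀ t, S t ⊆ M.E := fun t => hSlast ▸ hmono (Fin.le_last t)
  have hinit : ∀ t, M.IsBasis (B ∩ S t) (S t) := fun t =>
    hB.isBasis_inter (hSE t) (hmono.forall_rel_of_blocks hS0 hSlast
      (fun i j hij x hx y hy => (hcompat i j hij x hx y hy).1) t)
  have hBm_eq : ∀ i, Bm i = B ∩ (S i.succ \ S i.castSucc) := fun i =>
    (hBm i).unique (hB.restrict_contract (hmono (Fin.castSucc_le_succ i)) (hSE _) (hinit _)
      (hinit _))
  have hcover : B ⊆ ⋃ i : Fin (k + 1), S i.succ \ S i.castSucc := fun x hx =>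
    mem_iUnion.2 (Fin.exists_mem_succ_sdiff_castSucc S hS0 (hSlast ▸ hB.1.subset_ground hx))
  rw [← inter_eq_left.2 hcover, inter_iUnion]
  exact iUnion_congr fun i => (hBm_eq i).symm
end

section
/- Let V be a real normed vector space, f : V → ℝ a continuous linear functional, c ∈ ℝ, H = {x ∈ V : f(x) = c} and H⁺ = {x ∈ V : f(x) ≥ c}. Let P and Q be nonempty closed convex subsets of H⁺ such that P ∪ Q is convex, P ∪ Q is not contained in H, and P ∩ Q ⊆ H. Then P ⊆ Q or Q ⊆ P. -/
lemma stmt15_meet {V : Type*} [NormedAddCommGroup V] [NormedSpace ℝ V]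
    {P Q : Set V} (hPcl : IsClosed P) (hQcl : IsClosed Q) {x y : V}
    (hx : x ∈ P) (hy : y ∈ Q) (hseg : segment ℝ x y ⊆ P ∪ Q) :
    ∃ m ∈ segment ℝ x y, m ∈ P ∧ m ∈ Q := by
  have hpre := (convex_segment x y).isPreconnected
  rw [isPreconnected_closed_iff] at hpre
  obtain ⟨m, hm, hmP, hmQ⟩ := hpre P Q hPcl hQcl hseg
    ⟨x, left_mem_segment ℝ x y, hx⟩ ⟨y, right_mem_segment ℝ x y, hy⟩
  exact ⟨m, hm, hmP, hmQ⟩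

/-- Dichotomy for convex sets in a half-space: if `P` and `Q` are nonempty closed convex
subsets of the half-space `H⁺ = {x | f x ≥ c}` such that `P ∪ Q` is convex, `P ∪ Q` is not
contained in the bounding hyperplane `H = {x | f x = c}`, and `P ∩ Q ⊆ H`, then `P ⊆ Q` or
`Q ⊆ P`. -/
theorem stmt15 (V : Type*) [NormedAddCommGroup V] [NormedSpace ℝ V]
    (f : V →L[ℝ] ℝ) (c : ℝ) (P Q : Set V)
    (hPne : P.Nonempty) (hQne : Q.Nonempty)
    (hPcl : IsClosed P) (hQcl : IsClosed Q)
    (hPcv : Convex ℝ P) (hQcv : Convex ℝ Q)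
    (hPhs : P ⊆ {x | c ≤ f x}) (hQhs : Q ⊆ {x | c ≤ f x})
    (hUcv : Convex ℝ (P ∪ Q))
    (hnotH : ¬ (P ∪ Q ⊆ {x | f x = c}))
    (hint : P ∩ Q ⊆ {x | f x = c}) :
    P ⊆ Q ∨ Q ⊆ P := by
  by_contra hcon
  push_neg at hcon
  obtain ⟨h1, h2⟩ := hcon
  obtain ⟨p, hp, hpQ⟩ := Set.not_subset.mp h1
  obtain ⟨q, hq, hqP⟩ := Set.not_subset.mp h2
  -- a point of P ∩ Q on the segment [p, q]
  have hsegpq : segment ℝ p q ⊆ P ∪ Q :=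
    hUcv.segment_subset (Or.inl hp) (Or.inr hq)
  obtain ⟨m, hmseg, hmP, hmQ⟩ := stmt15_meet hPcl hQcl hp hq hsegpq
  have hmc : f m = c := hint ⟨hmP, hmQ⟩
  obtain ⟨a, b, ha, hb, hab, hm⟩ := hmseg
  have ha' : 0 < a := by
    rcases lt_or_eq_of_le ha with h | h
    · exact h
    · exfalso
      apply hqP
      have : m = q := by
        rw [← hm, ← h]; simp [show b = 1 by linarith]
      rwa [← this]
  have hb' : 0 < b := by
    rcases lt_or_eq_of_le hb with h | h
    · exact h
    · exfalso
      apply hpQ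
      have : m = p := by
        rw [← hm, ← h]; simp [show a = 1 by linarith]
      rwa [← this]
  have hfm : a * f p + b * f q = c := by
    rw [← hmc, ← hm]; simp [mul_comm]
  have hfp : c ≤ f p := hPhs hp
  have hfq : c ≤ f q := hQhs hq
  have hfpc : f p = c := by
    by_contra h
    have h' : c < f p := lt_of_le_of_ne hfp (Ne.symm h)
    have hc : a * c + b * c = c := by rw [← add_mul, hab, one_mul]
    nlinarith [mul_lt_mul_of_pos_left h' ha', mul_le_mul_of_nonneg_left hfq hb]
  have hfqc : f q = c := by
    by_contra h
    have h' : c < f q := lt_of_le_of_ne hfq (Ne.symm h)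
    have hc : a * c + b * c = c := by rw [← add_mul, hab, one_mul]
    nlinarith [mul_lt_mul_of_pos_left h' hb', mul_le_mul_of_nonneg_left hfp ha]
  -- a point above the hyperplane
  obtain ⟨z, hz, hzc⟩ := Set.not_subset.mp hnotH
  have hzgt : c < f z := lt_of_le_of_ne (hz.elim (fun h => hPhs h) (fun h => hQhs h)) (Ne.symm hzc)
  rcases hz with hzP | hzQ
  · -- segment from z ∈ P to q
    have hseg : segment ℝ z q ⊆ P ∪ Q := hUcv.segment_subset (Or.inl hzP) (Or.inr hq)
    obtain ⟨m', hm'seg, hm'P, hm'Q⟩ := stmt15_meet hPcl hQcl hzP hq hseg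
    have hm'c : f m' = c := hint ⟨hm'P, hm'Q⟩
    obtain ⟨a, b, ha, hb, hab, hm'⟩ := hm'seg
    have : a * f z + b * f q = c := by rw [← hm'c, ← hm']; simp [mul_comm]
    rw [hfqc] at this
    have ha0 : a = 0 := by
      by_contra h
      have h' : 0 < a := lt_of_le_of_ne ha (Ne.symm h)
      have hc : a * c + b * c = c := by rw [← add_mul, hab, one_mul]
      nlinarith [mul_lt_mul_of_pos_left hzgt h']
    have : m' = q := by rw [← hm', ha0]; simp [show b = 1 by linarith]
    exact hqP (this ▸ hm'P)
  · -- segment from z ∈ Q to p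
    have hseg : segment ℝ z p ⊆ P ∪ Q := hUcv.segment_subset (Or.inr hzQ) (Or.inl hp)
    obtain ⟨m', hm'seg, hm'Q, hm'P⟩ := stmt15_meet hQcl hPcl hzQ hp (hseg.trans (Set.union_comm P Q).subset)
    have hm'c : f m' = c := hint ⟨hm'P, hm'Q⟩
    obtain ⟨a, b, ha, hb, hab, hm'⟩ := hm'seg
    have : a * f z + b * f p = c := by rw [← hm'c, ← hm']; simp [mul_comm]
    rw [hfpc] at this
    have ha0 : a = 0 := by
      by_contra h
      have h' : 0 < a := lt_of_le_of_ne ha (Ne.symm h)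
      have hc : a * c + b * c = c := by rw [← add_mul, hab, one_mul]
      nlinarith [mul_lt_mul_of_pos_left hzgt h']
    have : m' = p := by rw [← hm', ha0]; simp [show b = 1 by linarith]
    exact hpQ (this ▸ hm'Q)
end

section
/- Let f : ℝⁿ → ℝ be a linear functional and c ∈ ℝ. Let P₁,…,P_ℓ be polytopes (convex hulls of nonempty finite subsets of ℝⁿ), each contained in the half-space {x : f(x) ≥ c}, and let b₁,…,b_ℓ be integers such that ∑_{i=1}^ℓ b_i·1_{P_i}(x) = 0 for all x ∈ ℝⁿ. Then ∑_{i : P_i ⊆ {x : f(x) = c}} b_i·1_{P_i}(x) = 0 for all x ∈ ℝⁿ; that is, the relation still holds after restricting the sum to those polytopes entirely contained in the bounding hyperplane. -/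
open scoped Classical

lemma cc_eq_Icc {K : Set ℝ} (hc : Convex ℝ K) (hk : IsCompact K) (hne : K.Nonempty) :
    K = Set.Icc (sInf K) (sSup K) := by
  apply Set.Subset.antisymm
  · intro y hy
    exact ⟨csInf_le hk.bddBelow hy, le_csSup hk.bddAbove hy⟩
  · exact hc.ordConnected.out (hk.sInf_mem hne) (hk.sSup_mem hne)

lemma one_dim {ι : Type} [Fintype ι] (K : ι → Set ℝ)
    (hcvx : ∀ i, Convex ℝ (K i)) (hcpt : ∀ i, IsCompact (K i))
    (b : ι → ℤ)
    (h : ∀ t : ℝ, ∑ i, b i * (K i).indicator (fun _ => (1:ℤ)) t = 0) :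
    ∑ i, (if (K i).Nonempty then b i else 0) = 0 := by
  -- key claim : fiberwise over sSup
  have claim : ∀ t : ℝ, ∑ i, (if (K i).Nonempty ∧ sSup (K i) = t then b i else 0) = 0 := by
    intro t
    -- choose δ
    set s : Finset ℝ := (Finset.univ.image (fun i => sInf (K i))) ∪
        (Finset.univ.image (fun i => sSup (K i))) with hs
    have hδ : ∃ δ : ℝ, 0 < δ ∧ ∀ v ∈ s, ¬ (t < v ∧ v ≤ t + δ) := by
      by_cases hne : (s.filter (fun v => t < v)).Nonempty
      · refine ⟨((s.filter (fun v => t < v)).min' hne - t)/2, ?_, ?_⟩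
        · have := (s.filter (fun v => t < v)).min'_mem hne
          have := (Finset.mem_filter.mp this).2
          linarith
        · intro v hv ⟨h1, h2⟩
          have hvm : (s.filter (fun v => t < v)).min' hne ≤ v :=
            Finset.min'_le _ v (Finset.mem_filter.mpr ⟨hv, h1⟩)
          have := (Finset.mem_filter.mp ((s.filter (fun v => t < v)).min'_mem hne)).2
          linarith
      · refine ⟨1, one_pos, fun v hv ⟨h1, h2⟩ => hne ⟨v, Finset.mem_filter.mpr ⟨hv, h1⟩⟩⟩
    obtain ⟨δ, hδ0, hδav⟩ := hδ
    have key : ∀ i, b i * ((K i).indicator (fun _ => (1:ℤ)) t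
        - (K i).indicator (fun _ => (1:ℤ)) (t + δ))
        = (if (K i).Nonempty ∧ sSup (K i) = t then b i else 0) := by
      intro i
      by_cases hne : (K i).Nonempty
      · have hIcc := cc_eq_Icc (hcvx i) (hcpt i) hne
        have hle : sInf (K i) ≤ sSup (K i) :=
          csInf_le_csSup hne (hcpt i).bddBelow (hcpt i).bddAbove
        have hinfs : sInf (K i) ∈ s := by
          simp [hs]
        have hsups : sSup (K i) ∈ s := by
          simp [hs]
        by_cases hβ : sSup (K i) = t
        · have h1 : t ∈ K i := by rw [hIcc, hβ]; exact ⟨hβ ▸ hle, le_refl t⟩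
          have h2 : t + δ ∉ K i := by
            rw [hIcc, hβ]; intro ⟨_, h⟩; linarith
          simp [Set.indicator_of_mem h1, Set.indicator_of_notMem h2, hne, hβ]
        · have heq : ((K i).indicator (fun _ => (1:ℤ)) t
              = (K i).indicator (fun _ => (1:ℤ)) (t + δ)) := by
            by_cases hmem : t ∈ K i
            · have := hIcc ▸ hmem
              have h1 : sInf (K i) ≤ t := this.1
              have h2 : t ≤ sSup (K i) := this.2
              have h3 : t < sSup (K i) := lt_of_le_of_ne h2 (fun e => hβ e.symm)
              have h4 : ¬ (t < sSup (K i) ∧ sSup (K i) ≤ t + δ) := hδav _ hsups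
              push_neg at h4
              have h5 : t + δ ≤ sSup (K i) := le_of_lt (h4 h3)
              have hmem2 : t + δ ∈ K i := by rw [hIcc]; exact ⟨by linarith, h5⟩
              rw [Set.indicator_of_mem hmem, Set.indicator_of_mem hmem2]
            · have hmem2 : t + δ ∉ K i := by
                rw [hIcc]; intro ⟨h1, h2⟩
                rw [hIcc] at hmem
                rcases lt_or_ge t (sInf (K i)) with hlt | hge
                · exact hδav _ hinfs ⟨hlt, by linarith⟩
                · exact hmem ⟨hge, by linarith⟩
              rw [Set.indicator_of_notMem hmem, Set.indicator_of_notMem hmem2]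
          rw [heq]
          simp [hβ]
      · have hK : K i = ∅ := Set.not_nonempty_iff_eq_empty.mp hne
        simp [hK, hne]
    calc ∑ i, (if (K i).Nonempty ∧ sSup (K i) = t then b i else 0)
        = ∑ i, (b i * ((K i).indicator (fun _ => (1:ℤ)) t
            - (K i).indicator (fun _ => (1:ℤ)) (t + δ))) := by
          exact Finset.sum_congr rfl (fun i _ => (key i).symm)
      _ = (∑ i, b i * (K i).indicator (fun _ => (1:ℤ)) t)
          - ∑ i, b i * (K i).indicator (fun _ => (1:ℤ)) (t + δ) := by
          rw [← Finset.sum_sub_distrib]; exact Finset.sum_congr rfl (fun i _ => by ring)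
      _ = 0 := by rw [h t, h (t+δ)]; ring
  -- now sum fiberwise
  classical
  rw [← Finset.sum_fiberwise_of_maps_to (g := fun i => sSup (K i))
      (t := Finset.univ.image (fun i => sSup (K i)))
      (fun i _ => Finset.mem_image_of_mem _ (Finset.mem_univ i))]
  apply Finset.sum_eq_zero
  intro t _
  calc ∑ i ∈ Finset.univ.filter (fun i => sSup (K i) = t), (if (K i).Nonempty then b i else 0)
      = ∑ i, (if (K i).Nonempty ∧ sSup (K i) = t then b i else 0) := by
        rw [Finset.sum_filter]
        apply Finset.sum_congr rfl
        intro i _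
        by_cases h1 : sSup (K i) = t <;> by_cases h2 : (K i).Nonempty <;> simp [h1, h2]
    _ = 0 := claim t

lemma star_lemma : ∀ (k : ℕ) {ι : Type} [Fintype ι] (K : ι → Set (Fin k → ℝ)),
    (∀ i, Convex ℝ (K i)) → (∀ i, IsCompact (K i)) → ∀ b : ι → ℤ,
    (∀ x, ∑ i, b i * (K i).indicator (fun _ => (1:ℤ)) x = 0) →
    ∑ i, (if (K i).Nonempty then b i else 0) = 0 := by
  intro k
  induction k with
  | zero =>
    intro ι _ K hcvx hcpt b h
    have x0 : Fin 0 → ℝ := fun i => i.elim0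
    calc ∑ i, (if (K i).Nonempty then b i else 0)
        = ∑ i, b i * (K i).indicator (fun _ => (1:ℤ)) x0 := by
          apply Finset.sum_congr rfl
          intro i _
          by_cases hne : (K i).Nonempty
          · have hy : x0 ∈ K i := by
              obtain ⟨y, hy⟩ := hne
              rwa [Subsingleton.elim y x0] at hy
            simp [Set.indicator_of_mem hy, hne]
          · have : x0 ∉ K i := fun hx => hne ⟨x0, hx⟩
            simp [Set.indicator_of_notMem this, hne]
      _ = 0 := h x0
  | succ k ih =>
    intro ι _ K hcvx hcpt b h
    -- sections
    set S : ι → ℝ → Set (Fin k → ℝ) := fun i t => {y | Matrix.vecCons t y ∈ K i} with hS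
    have hsec : ∀ t : ℝ, ∑ i, (if (S i t).Nonempty then b i else 0) = 0 := by
      intro t
      apply ih (fun i => S i t)
      · intro i
        intro y1 h1 y2 h2 a c ha hc hac
        have hcons : Matrix.vecCons t (a • y1 + c • y2)
            = a • Matrix.vecCons t y1 + c • Matrix.vecCons t y2 := by
          funext j
          refine Fin.cases ?_ ?_ j
          · simp
            linear_combination (-t) * hac
          · intro j'; simp
        show Matrix.vecCons t (a • y1 + c • y2) ∈ K i
        rw [hcons]
        exact hcvx i h1 h2 ha hc hac
      · intro i
        have himg : S i t = Matrix.vecTail '' (K i ∩ {x | x 0 = t}) := by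
          ext y
          constructor
          · intro hy
            exact ⟨Matrix.vecCons t y, ⟨hy, by simp⟩, by simp [Matrix.tail_cons]⟩
          · rintro ⟨x, ⟨hx, hx0⟩, rfl⟩
            show Matrix.vecCons t (Matrix.vecTail x) ∈ K i
            have : Matrix.vecCons t (Matrix.vecTail x) = x := by
              rw [show t = Matrix.vecHead x from hx0.symm, Matrix.cons_head_tail]
            rwa [this]
        rw [himg]
        apply IsCompact.image
        · exact (hcpt i).inter_right (isClosed_eq (continuous_apply 0) continuous_const)
        · exact continuous_pi (fun j => continuous_apply j.succ)
      · intro y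
        calc ∑ i, b i * (S i t).indicator (fun _ => (1:ℤ)) y
            = ∑ i, b i * (K i).indicator (fun _ => (1:ℤ)) (Matrix.vecCons t y) := by
              apply Finset.sum_congr rfl
              intro i _
              congr 1
          _ = 0 := h (Matrix.vecCons t y)
    -- push to 1-D
    set J : ι → Set ℝ := fun i => (fun x => x 0) '' K i with hJ
    have hSJ : ∀ i t, (S i t).Nonempty ↔ t ∈ J i := by
      intro i t
      constructor
      · rintro ⟨y, hy⟩
        exact ⟨Matrix.vecCons t y, hy, by simp⟩
      · rintro ⟨x, hx, hx0⟩
        refine ⟨Matrix.vecTail x, ?_⟩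
        show Matrix.vecCons t (Matrix.vecTail x) ∈ K i
        have : Matrix.vecCons t (Matrix.vecTail x) = x := by
          rw [show t = Matrix.vecHead x from hx0.symm, Matrix.cons_head_tail]
        rwa [this]
    have h1d := one_dim J
        (fun i => (hcvx i).linear_image (LinearMap.proj 0))
        (fun i => (hcpt i).image (continuous_apply 0)) b ?_
    · calc ∑ i, (if (K i).Nonempty then b i else 0)
          = ∑ i, (if (J i).Nonempty then b i else 0) := by
            apply Finset.sum_congr rfl
            intro i _
            congr 1
            simp only [hJ, Set.image_nonempty]
        _ = 0 := h1d
    · intro t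
      calc ∑ i, b i * (J i).indicator (fun _ => (1:ℤ)) t
          = ∑ i, (if (S i t).Nonempty then b i else 0) := by
            apply Finset.sum_congr rfl
            intro i _
            rw [Set.indicator_apply]
            by_cases hm : t ∈ J i
            · rw [if_pos hm, if_pos ((hSJ i t).mpr hm), mul_one]
            · rw [if_neg hm, if_neg (fun hn => hm ((hSJ i t).mp hn)), mul_zero]
        _ = 0 := hsec t

/-- If polytopes `P₁, …, P_ℓ` all lie in the half-space `{x | f x ≥ c}` and an integer
combination of their indicator functions vanishes identically, then the same combination
restricted to the polytopes entirely contained in the bounding hyperplane `{x | f x = c}`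
also vanishes identically. -/
theorem stmt16 (n ℓ : ℕ) (f : (Fin n → ℝ) →ₗ[ℝ] ℝ) (c : ℝ)
    (P : Fin ℓ → Set (Fin n → ℝ))
    (hpoly : ∀ i, ∃ s : Finset (Fin n → ℝ), s.Nonempty ∧
      P i = convexHull ℝ (s : Set (Fin n → ℝ)))
    (hhalf : ∀ i, P i ⊆ {x | c ≤ f x})
    (b : Fin ℓ → ℤ)
    (hzero : ∀ x, ∑ i, b i * Set.indicator (P i) (fun _ => (1 : ℤ)) x = 0) :
    ∀ x, ∑ i, (if P i ⊆ {y | f y = c}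
        then b i * Set.indicator (P i) (fun _ => (1 : ℤ)) x else 0) = 0 := by
  have hPcvx : ∀ i, Convex ℝ (P i) := by
    intro i; obtain ⟨s, _, hPeq⟩ := hpoly i; rw [hPeq]; exact convex_convexHull ℝ _
  have hPcpt : ∀ i, IsCompact (P i) := by
    intro i; obtain ⟨s, _, hPeq⟩ := hpoly i; rw [hPeq]
    exact s.finite_toSet.isCompact_convexHull ℝ
  intro x
  by_cases hxc : f x = c
  swap
  · apply Finset.sum_eq_zero
    intro i _
    split_ifs with hi
    · rw [Set.indicator_of_notMem (fun hx => hxc (hi hx)), mul_zero]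
    · rfl
  -- main case : f x = c
  obtain ⟨r, hr0, hrU⟩ : ∃ r > 0, ∀ i, x ∉ P i → ∀ y ∈ Metric.closedBall x r, y ∉ P i := by
    have hU : IsOpen (⋂ i ∈ Finset.univ.filter (fun i => x ∉ P i), (P i)ᶜ) :=
      isOpen_biInter_finset (fun i _ => (hPcpt i).isClosed.isOpen_compl)
    have hxU : x ∈ ⋂ i ∈ Finset.univ.filter (fun i => x ∉ P i), (P i)ᶜ :=
      Set.mem_iInter₂.mpr (fun i hi => (Finset.mem_filter.mp hi).2)
    obtain ⟨ε, hε0, hball⟩ := Metric.isOpen_iff.mp hU x hxU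
    refine ⟨ε/2, by linarith, ?_⟩
    intro i hxi y hy
    have hyb : y ∈ Metric.ball x ε :=
      lt_of_le_of_lt (Metric.mem_closedBall.mp hy) (by linarith)
    exact Set.mem_iInter₂.mp (hball hyb) i
      (Finset.mem_filter.mpr ⟨Finset.mem_univ i, hxi⟩)
  set K : Fin ℓ → Set (Fin n → ℝ) := fun i => P i ∩ Metric.closedBall x r with hKdef
  have hKcvx : ∀ i, Convex ℝ (K i) := fun i => (hPcvx i).inter (convex_closedBall x r)
  have hKcpt : ∀ i, IsCompact (K i) :=
    fun i => (hPcpt i).inter_right Metric.isClosed_closedBall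
  have hfc : Continuous f := f.continuous_of_finiteDimensional
  have hstar : ∀ τ : ℝ,
      ∑ i, (if (K i ∩ {y | f y = τ}).Nonempty then b i else 0) = 0 := by
    intro τ
    apply star_lemma n (fun i => K i ∩ {y | f y = τ})
    · intro i
      refine (hKcvx i).inter ?_
      intro y1 h1 y2 h2 a c' ha hc' hac
      show f (a • y1 + c' • y2) = τ
      rw [map_add, map_smul, map_smul, smul_eq_mul, smul_eq_mul,
        show f y1 = τ from h1, show f y2 = τ from h2]
      linear_combination τ * hac
    · intro i
      exact (hKcpt i).inter_right (isClosed_eq hfc continuous_const)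
    · intro y
      by_cases hy : f y = τ ∧ y ∈ Metric.closedBall x r
      · calc ∑ i, b i * (K i ∩ {y | f y = τ}).indicator (fun _ => (1:ℤ)) y
            = ∑ i, b i * (P i).indicator (fun _ => (1:ℤ)) y := by
              apply Finset.sum_congr rfl
              intro i _
              congr 1
              rw [Set.indicator_apply, Set.indicator_apply]
              refine if_congr ⟨fun h => h.1.1, fun h => ⟨⟨h, hy.2⟩, hy.1⟩⟩ rfl rfl
          _ = 0 := hzero y
      · apply Finset.sum_eq_zero
        intro i _
        rw [Set.indicator_of_notMem (fun hmem => hy ⟨hmem.2, hmem.1.2⟩), mul_zero]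
  have hA : ∑ i, (if x ∈ P i then b i else 0) = 0 := by
    calc ∑ i, (if x ∈ P i then b i else 0)
        = ∑ i, b i * (P i).indicator (fun _ => (1:ℤ)) x := by
          apply Finset.sum_congr rfl
          intro i _
          rw [Set.indicator_apply]
          by_cases hm : x ∈ P i <;> simp [hm]
      _ = 0 := hzero x
  have hD : ∑ i, (if x ∈ P i ∧ ¬ P i ⊆ {y | f y = c} then b i else 0) = 0 := by
    by_cases hDe : ∃ i, x ∈ P i ∧ ¬ P i ⊆ {y | f y = c}
    swap
    · apply Finset.sum_eq_zero
      intro i _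
      exact if_neg (fun h => hDe ⟨i, h⟩)
    · have key : ∀ i, ∃ y, (x ∈ P i ∧ ¬ P i ⊆ {y | f y = c}) → (y ∈ K i ∧ c < f y) := by
        intro i
        by_cases hi : x ∈ P i ∧ ¬ P i ⊆ {y | f y = c}
        · obtain ⟨hxP, hns⟩ := hi
          obtain ⟨z, hzP, hzc⟩ := Set.not_subset.mp hns
          have hzc' : c < f z := lt_of_le_of_ne (hhalf i hzP) (Ne.symm hzc)
          set d := dist z x with hd
          set t0 := min 1 (r / (d + 1)) with ht0
          have hd0 : (0:ℝ) ≤ d := dist_nonneg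
          have ht0pos : 0 < t0 := lt_min one_pos (div_pos hr0 (by linarith))
          have ht0le1 : t0 ≤ 1 := min_le_left _ _
          refine ⟨(1 - t0) • x + t0 • z, fun _ => ⟨⟨?_, ?_⟩, ?_⟩⟩
          · exact (hPcvx i) hxP hzP (by linarith) (le_of_lt ht0pos) (by ring)
          · rw [Metric.mem_closedBall, dist_eq_norm,
              show (1 - t0) • x + t0 • z - x = t0 • (z - x) by module,
              norm_smul, Real.norm_of_nonneg (le_of_lt ht0pos),
              show ‖z - x‖ = d from (dist_eq_norm z x).symm]
            have ht0r : t0 * (d+1) ≤ r := by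
              calc t0 * (d+1) ≤ (r/(d+1)) * (d+1) :=
                    mul_le_mul_of_nonneg_right (min_le_right _ _) (by linarith)
                _ = r := div_mul_cancel₀ _ (by linarith)
            nlinarith [ht0pos]
          · show c < f ((1 - t0) • x + t0 • z)
            rw [map_add, map_smul, map_smul, smul_eq_mul, smul_eq_mul, hxc]
            nlinarith [ht0pos, hzc']
        · exact ⟨x, fun h => absurd h hi⟩
      choose y hy using key
      set D : Finset (Fin ℓ) :=
        Finset.univ.filter (fun i => x ∈ P i ∧ ¬ P i ⊆ {y | f y = c}) with hDdef
      have hDne : D.Nonempty := by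
        obtain ⟨i, hi⟩ := hDe
        exact ⟨i, Finset.mem_filter.mpr ⟨Finset.mem_univ i, hi⟩⟩
      set m := (D.image (fun i => f (y i))).min' (hDne.image _) with hm
      have hmlb : ∀ i ∈ D, m ≤ f (y i) :=
        fun i hi => Finset.min'_le _ _ (Finset.mem_image_of_mem _ hi)
      have hmc : c < m := by
        obtain ⟨i, hi, he⟩ :=
          Finset.mem_image.mp ((D.image (fun i => f (y i))).min'_mem (hDne.image _))
        have h2 := (hy i (Finset.mem_filter.mp hi).2).2
        rw [he] at h2
        exact h2
      set τ := (c + m)/2 with hτ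
      have hτ1 : c < τ := by rw [hτ]; linarith
      have hτ2 : τ < m := by rw [hτ]; linarith
      calc ∑ i, (if x ∈ P i ∧ ¬ P i ⊆ {y | f y = c} then b i else 0)
          = ∑ i, (if (K i ∩ {y | f y = τ}).Nonempty then b i else 0) := by
            apply Finset.sum_congr rfl
            intro i _
            refine if_congr ⟨?_, ?_⟩ rfl rfl
            · intro hi
              have hiD : i ∈ D := Finset.mem_filter.mpr ⟨Finset.mem_univ i, hi⟩
              have hyK := (hy i hi).1
              have hxK : x ∈ K i := ⟨hi.1, Metric.mem_closedBall_self (le_of_lt hr0)⟩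
              have hJcvx : Convex ℝ (f '' K i) := (hKcvx i).is_linear_image f.isLinear
              have hτJ : τ ∈ f '' K i := by
                refine hJcvx.ordConnected.out ⟨x, hxK, hxc⟩ ⟨y i, hyK, rfl⟩ ?_
                exact ⟨le_of_lt hτ1, le_of_lt (lt_of_lt_of_le hτ2 (hmlb i hiD))⟩
              obtain ⟨w, hwK, hwτ⟩ := hτJ
              exact ⟨w, hwK, hwτ⟩
            · rintro ⟨w, ⟨⟨hwP, hwB⟩, hwτ⟩⟩
              have hwτ' : f w = τ := hwτ
              constructor
              · by_contra hxP
                exact (hrU i hxP w hwB) hwP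
              · intro hsub
                have : f w = c := hsub hwP
                rw [hwτ'] at this
                linarith
        _ = 0 := hstar τ
  calc ∑ i, (if P i ⊆ {y | f y = c}
          then b i * Set.indicator (P i) (fun _ => (1 : ℤ)) x else 0)
      = ∑ i, ((if x ∈ P i then b i else 0)
          - (if x ∈ P i ∧ ¬ P i ⊆ {y | f y = c} then b i else 0)) := by
        apply Finset.sum_congr rfl
        intro i _
        by_cases hsub : P i ⊆ {y | f y = c} <;> by_cases hx : x ∈ P i <;>
          simp [hsub, hx, Set.indicator_of_mem, Set.indicator_of_notMem]
    _ = 0 := by rw [Finset.sum_sub_distrib, hA, hD, sub_zero]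
end
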